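/- arXiv:2509.17943 — 2 statements merged into one kernel-verified Lean document; each statement's English description precedes it below -/
import Mathlib

section
/- Let X ∈ ℝ^{N×D} have full column rank D, Y ∈ ℝ^{N×C}, 1 ≤ K ≤ D, and Ŷ := X(XᵀX)⁻¹XᵀY. Assume λ_K(ŶŶᵀ) > λ_{K+1}(ŶŶᵀ) and λ_K(ŶŶᵀ) > 0. Then for every global minimizer (V*, W*) of (V, W) ↦ ‖XVW − Y‖_F² over V ∈ ℝ^{D×K}, W ∈ ℝ^{K×C}, the column space of XV* equals the top-K eigenspace of ŶŶᵀ (the K-dimensional span of eigenvectors of ŶŶᵀ associated with its K largest eigenvalues). -/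
/-!
Since `Xᵀ(Ŷ - Y) = 0`, Pythagoras gives `‖XG - Y‖² = ‖XG - Ŷ‖² + ‖Ŷ - Y‖²`, so minimizers of
`‖XVW - Y‖²` minimize `‖XVW - Ŷ‖²`. Let `w₁, …, w_N` be orthonormal eigenvectors of `ŶŶᵀ` with
eigenvalues `μ₁ ≥ … ≥ μ_N ≥ 0`. If the columns of `U` are an orthonormal basis of the column space
of `XV`, then `‖XVW - Ŷ‖² ≥ ‖Ŷ‖² - ‖UᵀŶ‖²` and `‖UᵀŶ‖² = ∑ μᵢ cᵢ` with `cᵢ = ‖Uᵀwᵢ‖² ∈ [0, 1]`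
and `∑ cᵢ ≤ K`. The top `K` eigenvectors lie in the column space of `Ŷ`, hence of `X`, so the
projection of `Ŷ` onto their span is of the form `XV₀W₀`; it attains `‖Ŷ‖² - (μ₁ + … + μ_K)`.
At a minimizer therefore `∑ μᵢ cᵢ ≥ μ₁ + … + μ_K`, and the gap `μ_K > μ_{K+1} ≥ 0` forces
`cᵢ = 1`, i.e. `wᵢ ∈ col(XV*)`, for `i ≤ K`. These `wᵢ` span the top-`K` eigenspace, whose
dimension is at least `K ≥ rank(XV*)`.
-/

open Matrix BigOperators

noncomputable section

/-- Squared Frobenius norm of a real matrix. -/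
def frobSq {m n : Type*} [Fintype m] [Fintype n] (M : Matrix m n ℝ) : ℝ :=
  ∑ i, ∑ j, (M i j) ^ 2

/-- `AᵀA` is Hermitian over `ℝ`. -/
theorem isHermitian_tmul {m n : ℕ} (A : Matrix (Fin m) (Fin n) ℝ) :
    (Aᵀ * A).IsHermitian := by
  simpa [Matrix.conjTranspose_eq_transpose_of_trivial] using
    Matrix.isHermitian_conjTranspose_mul_self A

/-- `AAᵀ` is Hermitian over `ℝ`. -/
theorem isHermitian_mult {m n : ℕ} (A : Matrix (Fin m) (Fin n) ℝ) :
    (A * Aᵀ).IsHermitian := by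
  simpa [Matrix.conjTranspose_eq_transpose_of_trivial] using
    Matrix.isHermitian_mul_conjTranspose_self A

/-- The `i`-th eigenvalue of a real symmetric (Hermitian) matrix, in decreasing order
(`eigDesc hM 0` is the largest eigenvalue, counted with multiplicity). -/
def eigDesc {n : ℕ} {M : Matrix (Fin n) (Fin n) ℝ} (hM : M.IsHermitian) (i : Fin n) : ℝ :=
  hM.eigenvalues (Tuple.sort hM.eigenvalues i.rev)

/-- Sum of the `K` largest eigenvalues of a Hermitian matrix. -/
def sumTopEig {n : ℕ} {M : Matrix (Fin n) (Fin n) ℝ} (hM : M.IsHermitian) (K : ℕ) : ℝ :=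
  ∑ i : Fin n, if (i : ℕ) < K then eigDesc hM i else 0

/-- Sum of the eigenvalues of a Hermitian matrix after the `K` largest ones. -/
def sumTailEig {n : ℕ} {M : Matrix (Fin n) (Fin n) ℝ} (hM : M.IsHermitian) (K : ℕ) : ℝ :=
  ∑ i : Fin n, if K ≤ (i : ℕ) then eigDesc hM i else 0

/-- Top-`K` eigenspace of a Hermitian matrix: the sum of the eigenspaces associated with
its `K` largest eigenvalues. -/
def topEigSpace {n : ℕ} {M : Matrix (Fin n) (Fin n) ℝ} (hM : M.IsHermitian) (K : ℕ) :
    Submodule ℝ (Fin n → ℝ) :=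
  ⨆ i : {i : Fin n // (i : ℕ) < K},
    LinearMap.ker (M.mulVecLin - eigDesc hM i.1 • LinearMap.id)

/-- Ordinary least squares prediction of `Y` from `X`. -/
def ols {N D C : ℕ} (X : Matrix (Fin N) (Fin D) ℝ) (Y : Matrix (Fin N) (Fin C) ℝ) :
    Matrix (Fin N) (Fin C) ℝ :=
  X * (Xᵀ * X)⁻¹ * Xᵀ * Y


section Frobenius

variable {m n : Type*} [Fintype m] [Fintype n]

theorem frobSq_nonneg (M : Matrix m n ℝ) : 0 ≤ frobSq M :=
  Finset.sum_nonneg fun _ _ => Finset.sum_nonneg fun _ _ => sq_nonneg _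

theorem frobSq_sub_comm (A B : Matrix m n ℝ) : frobSq (A - B) = frobSq (B - A) := by
  refine Finset.sum_congr rfl fun i _ => Finset.sum_congr rfl fun j _ => ?_
  rw [Matrix.sub_apply, Matrix.sub_apply, ← neg_sub, neg_sq]

theorem frobSq_eq_sum_dotProduct (M : Matrix m n ℝ) : frobSq M = ∑ i, M i ⬝ᵥ M i := by
  simp [frobSq, dotProduct, sq]

theorem frobSq_eq_trace (M : Matrix m n ℝ) : frobSq M = trace (Mᵀ * M) := by
  rw [frobSq, trace, Finset.sum_comm]
  simp [mul_apply, sq]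

theorem frobSq_add_of_transpose_mul_eq_zero {B R : Matrix m n ℝ} (h : Bᵀ * R = 0) :
    frobSq (B + R) = frobSq B + frobSq R := by
  have h' : Rᵀ * B = 0 := by simpa [transpose_mul] using congrArg transpose h
  simp only [frobSq_eq_trace, transpose_add, Matrix.add_mul, Matrix.mul_add, h, h', trace_add,
    trace_zero]
  ring

theorem frobSq_transpose_mul_eq_trace {ι : Type*} [Fintype ι] (Z : Matrix n m ℝ)
    (U : Matrix n ι ℝ) : frobSq (Uᵀ * Z) = trace (Uᵀ * (Z * Zᵀ) * U) := by
  rw [frobSq_eq_trace, transpose_mul, transpose_transpose, trace_mul_comm]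
  simp only [Matrix.mul_assoc]

end Frobenius

section OrthonormalColumns

variable {m n ι : Type*} [Fintype n] [Fintype ι] [DecidableEq ι] {U : Matrix n ι ℝ}

theorem transpose_mul_sub_mul_transpose_mul (hU : Uᵀ * U = 1) (Z : Matrix n m ℝ) :
    Uᵀ * (Z - U * (Uᵀ * Z)) = 0 := by
  rw [Matrix.mul_sub, ← Matrix.mul_assoc, hU, Matrix.one_mul, sub_self]

theorem dotProduct_sub_mulVec_transpose_mulVec (hU : Uᵀ * U = 1) (x : n → ℝ) :
    (x - U *ᵥ (Uᵀ *ᵥ x)) ⬝ᵥ (x - U *ᵥ (Uᵀ *ᵥ x)) = x ⬝ᵥ x - (Uᵀ *ᵥ x) ⬝ᵥ (Uᵀ *ᵥ x) := by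
  have hcross : x ⬝ᵥ U *ᵥ (Uᵀ *ᵥ x) = (Uᵀ *ᵥ x) ⬝ᵥ (Uᵀ *ᵥ x) := by
    rw [dotProduct_mulVec, mulVec_transpose]
  have hsq : U *ᵥ (Uᵀ *ᵥ x) ⬝ᵥ U *ᵥ (Uᵀ *ᵥ x) = (Uᵀ *ᵥ x) ⬝ᵥ (Uᵀ *ᵥ x) := by
    rw [dotProduct_mulVec, ← mulVec_transpose, mulVec_mulVec, hU, one_mulVec]
  rw [sub_dotProduct, dotProduct_sub, dotProduct_sub, dotProduct_comm (U *ᵥ _) x, hcross, hsq]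
  ring

theorem dotProduct_transpose_mulVec_le (hU : Uᵀ * U = 1) (x : n → ℝ) :
    (Uᵀ *ᵥ x) ⬝ᵥ (Uᵀ *ᵥ x) ≤ x ⬝ᵥ x := by
  have h0 : 0 ≤ (x - U *ᵥ (Uᵀ *ᵥ x)) ⬝ᵥ (x - U *ᵥ (Uᵀ *ᵥ x)) :=
    Finset.sum_nonneg fun _ _ => mul_self_nonneg _
  linarith [dotProduct_sub_mulVec_transpose_mulVec hU x]

theorem mem_range_of_dotProduct_transpose_mulVec_eq (hU : Uᵀ * U = 1) {x : n → ℝ}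
    (h : (Uᵀ *ᵥ x) ⬝ᵥ (Uᵀ *ᵥ x) = x ⬝ᵥ x) : x ∈ LinearMap.range U.mulVecLin := by
  have h0 : x - U *ᵥ (Uᵀ *ᵥ x) = 0 := dotProduct_self_eq_zero.mp
    (by rw [dotProduct_sub_mulVec_transpose_mulVec hU, h, sub_self])
  exact ⟨Uᵀ *ᵥ x, (sub_eq_zero.mp h0).symm⟩

variable [Fintype m]

theorem frobSq_mul_transpose_mul_sub (hU : Uᵀ * U = 1) (Z : Matrix n m ℝ) :
    frobSq (U * (Uᵀ * Z) - Z) = frobSq Z - frobSq (Uᵀ * Z) := by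
  have hsplit := frobSq_add_of_transpose_mul_eq_zero (B := U * (Uᵀ * Z))
    (R := Z - U * (Uᵀ * Z)) (by
      rw [transpose_mul, Matrix.mul_assoc, transpose_mul_sub_mul_transpose_mul hU,
        Matrix.mul_zero])
  have hproj : frobSq (U * (Uᵀ * Z)) = frobSq (Uᵀ * Z) := by
    rw [frobSq_eq_trace, frobSq_eq_trace, transpose_mul, Matrix.mul_assoc,
      ← Matrix.mul_assoc Uᵀ U, hU, Matrix.one_mul]
  rw [add_sub_cancel, hproj] at hsplit
  rw [frobSq_sub_comm, hsplit]
  ring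

theorem frobSq_sub_frobSq_le (hU : Uᵀ * U = 1) (Z : Matrix n m ℝ) (C : Matrix ι m ℝ) :
    frobSq Z - frobSq (Uᵀ * Z) ≤ frobSq (U * C - Z) := by
  have hsplit := frobSq_add_of_transpose_mul_eq_zero (B := U * (C - Uᵀ * Z))
    (R := U * (Uᵀ * Z) - Z) (by
      rw [transpose_mul, Matrix.mul_assoc, ← neg_sub Z, Matrix.mul_neg,
        transpose_mul_sub_mul_transpose_mul hU, neg_zero, Matrix.mul_zero])
  have hB : U * (C - Uᵀ * Z) + (U * (Uᵀ * Z) - Z) = U * C - Z := by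
    rw [Matrix.mul_sub]; abel
  rw [hB, frobSq_mul_transpose_mul_sub hU] at hsplit
  linarith [frobSq_nonneg (U * (C - Uᵀ * Z))]

end OrthonormalColumns

theorem exists_mul_eq_of_range_le {R : Type*} [CommSemiring R] {m n p : Type*} [Fintype n]
    [Fintype p] [DecidableEq p] {X : Matrix m n R} {A : Matrix m p R}
    (h : LinearMap.range A.mulVecLin ≤ LinearMap.range X.mulVecLin) :
    ∃ V : Matrix n p R, X * V = A := by
  have hcol : ∀ k, ∃ v, X *ᵥ v = A.col k := fun k =>
    h ⟨Pi.single k 1, by rw [mulVecLin_apply, mulVec_single_one]⟩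
  choose v hv using hcol
  refine ⟨(of v)ᵀ, ?_⟩
  ext i k
  simpa [mul_apply, mulVec, dotProduct] using congrFun (hv k) i

theorem exists_transpose_mul_self_eq_one_range_eq {n : Type*} [Fintype n] [DecidableEq n]
    (S : Submodule ℝ (n → ℝ)) :
    ∃ U : Matrix n (Fin (Module.finrank ℝ S)) ℝ, Uᵀ * U = 1 ∧ LinearMap.range U.mulVecLin = S := by
  set e := WithLp.linearEquiv 2 ℝ (n → ℝ)
  set b := (stdOrthonormalBasis ℝ (S.map (e.symm : (n → ℝ) →ₗ[ℝ] EuclideanSpace ℝ n))).reindex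
    (finCongr (LinearEquiv.finrank_map_eq e.symm S))
  set U : Matrix n (Fin (Module.finrank ℝ S)) ℝ := (of fun l => e (b l))ᵀ
  have hU : Uᵀ * U = 1 := by
    ext l l'
    rw [one_apply, ← orthonormal_iff_ite.mp b.orthonormal l l', Submodule.coe_inner,
      EuclideanSpace.inner_eq_star_dotProduct]
    exact Finset.sum_congr rfl fun i _ => mul_comm _ _
  refine ⟨U, hU, Submodule.eq_of_le_of_finrank_eq ?_ ?_⟩
  · rw [range_mulVecLin, Submodule.span_le]
    rintro _ ⟨l, rfl⟩
    exact (Submodule.mem_map_equiv (p := S)).mp (b l).2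
  · change U.rank = _
    refine le_antisymm (by simpa using rank_le_card_width U) ?_
    calc Module.finrank ℝ S = (1 : Matrix (Fin (Module.finrank ℝ S)) _ ℝ).rank := by simp
      _ ≤ U.rank := hU ▸ rank_mul_le_right _ _

theorem trace_transpose_mul_diagonal_mul {n ι : Type*} [Fintype n] [DecidableEq n] [Fintype ι]
    (G : Matrix n ι ℝ) (d : n → ℝ) :
    trace (Gᵀ * diagonal d * G) = ∑ i, d i * (G i ⬝ᵥ G i) := by
  simp only [trace, diag, mul_apply, transpose_apply, diagonal_apply, mul_ite, mul_zero,
    Finset.sum_ite_eq', Finset.mem_univ, if_true, dotProduct, Finset.mul_sum]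
  rw [Finset.sum_comm]
  exact Finset.sum_congr rfl fun i _ => Finset.sum_congr rfl fun l _ => by ring

theorem eq_one_of_sum_le_sum_mul {ι : Type*} [Fintype ι] [DecidableEq ι] (s : Finset ι)
    {μ c : ι → ℝ} {t : ℝ} (ht : 0 ≤ t) (hs : ∀ i ∈ s, t < μ i) (hsc : ∀ i ∉ s, μ i ≤ t)
    (hc0 : ∀ i, 0 ≤ c i) (hc1 : ∀ i, c i ≤ 1) (hcs : ∑ i, c i ≤ s.card)
    (hle : ∑ i ∈ s, μ i ≤ ∑ i, μ i * c i) {i : ι} (hi : i ∈ s) : c i = 1 := by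
  set d : ι → ℝ := fun i => if i ∈ s then (μ i - t) * (1 - c i) else (t - μ i) * c i
  have hd0 : ∀ i, 0 ≤ d i := by
    intro i
    by_cases h : i ∈ s
    · simpa [d, h] using mul_nonneg (sub_nonneg.mpr (hs i h).le) (sub_nonneg.mpr (hc1 i))
    · simpa [d, h] using mul_nonneg (sub_nonneg.mpr (hsc i h)) (hc0 i)
  have hsum : ∑ i, d i = ∑ i ∈ s, μ i - ∑ i, μ i * c i + t * (∑ i, c i - s.card) := by
    have hd : ∀ i, d i = (if i ∈ s then μ i - t else 0) - (μ i * c i - t * c i) := by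
      intro i
      by_cases h : i ∈ s <;> simp only [d, h, if_true, if_false] <;> ring
    simp only [hd, Finset.sum_sub_distrib, ← Finset.sum_filter, Finset.filter_mem_eq_inter,
      Finset.univ_inter, Finset.sum_const, nsmul_eq_mul, ← Finset.mul_sum]
    ring
  have hzero : d i = 0 := by
    refine (Finset.sum_eq_zero_iff_of_nonneg fun j _ => hd0 j).mp (le_antisymm ?_ ?_) i
      (Finset.mem_univ i)
    · rw [hsum]
      linarith [mul_nonpos_of_nonneg_of_nonpos ht (sub_nonpos.mpr hcs)]
    · exact Finset.sum_nonneg fun j _ => hd0 j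
  simp only [d, if_pos hi, mul_eq_zero, sub_eq_zero] at hzero
  exact (hzero.resolve_left (hs i hi).ne').symm

section SortedEigenbasis

variable {n : ℕ} {M : Matrix (Fin n) (Fin n) ℝ} (hM : M.IsHermitian)

def eigvecDesc : Matrix (Fin n) (Fin n) ℝ :=
  Matrix.of fun i => ⇑(hM.eigenvectorBasis (Tuple.sort hM.eigenvalues i.rev))

theorem eigvecDesc_mul_transpose : eigvecDesc hM * (eigvecDesc hM)ᵀ = 1 := by
  have hU : (hM.eigenvectorUnitary : Matrix (Fin n) (Fin n) ℝ)ᵀ * hM.eigenvectorUnitary = 1 := by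
    simpa [star_eq_conjTranspose] using Unitary.coe_star_mul_self hM.eigenvectorUnitary
  have hE : eigvecDesc hM = (hM.eigenvectorUnitary : Matrix (Fin n) (Fin n) ℝ)ᵀ.submatrix
      (Fin.revPerm.trans (Tuple.sort hM.eigenvalues)) id := rfl
  rw [hE, transpose_submatrix, transpose_transpose,
    ← submatrix_mul _ _ _ _ _ Function.bijective_id, hU, submatrix_one_equiv]

theorem transpose_mul_eigvecDesc : (eigvecDesc hM)ᵀ * eigvecDesc hM = 1 :=
  mul_eq_one_comm.mp (eigvecDesc_mul_transpose hM)

theorem dotProduct_eigvecDesc_self (i : Fin n) : eigvecDesc hM i ⬝ᵥ eigvecDesc hM i = 1 := by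
  simpa [mul_apply, dotProduct] using congrFun (congrFun (eigvecDesc_mul_transpose hM) i) i

theorem mulVec_eigvecDesc (i : Fin n) :
    M *ᵥ eigvecDesc hM i = eigDesc hM i • eigvecDesc hM i :=
  hM.mulVec_eigenvectorBasis _

theorem mul_transpose_eigvecDesc :
    M * (eigvecDesc hM)ᵀ = (eigvecDesc hM)ᵀ * diagonal (eigDesc hM) := by
  ext k i
  rw [mul_diagonal]
  simpa [mul_apply, mulVec, dotProduct, mul_comm] using congrFun (mulVec_eigvecDesc hM i) k

theorem eigDesc_antitone : Antitone (eigDesc hM) :=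
  fun _ _ hij => Tuple.monotone_sort _ (Fin.rev_le_rev.mpr hij)

theorem sum_dotProduct_eigvecDesc_smul (x : Fin n → ℝ) :
    ∑ j, (eigvecDesc hM j ⬝ᵥ x) • eigvecDesc hM j = x :=
  calc ∑ j, (eigvecDesc hM j ⬝ᵥ x) • eigvecDesc hM j = (eigvecDesc hM *ᵥ x) ᵥ* eigvecDesc hM :=
        (vecMul_eq_sum _ _).symm
    _ = x := by rw [← mulVec_transpose, mulVec_mulVec, transpose_mul_eigvecDesc, one_mulVec]

theorem dotProduct_eigvecDesc_eq_zero {x : Fin n → ℝ} {r : ℝ} (hx : M *ᵥ x = r • x) {j : Fin n}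
    (hj : eigDesc hM j ≠ r) : eigvecDesc hM j ⬝ᵥ x = 0 := by
  have hsymm : Mᵀ = M := by simpa [conjTranspose_eq_transpose_of_trivial] using hM.eq
  have h : eigDesc hM j * (eigvecDesc hM j ⬝ᵥ x) = r * (eigvecDesc hM j ⬝ᵥ x) :=
    calc eigDesc hM j * (eigvecDesc hM j ⬝ᵥ x) = (M *ᵥ eigvecDesc hM j) ⬝ᵥ x := by
          rw [mulVec_eigvecDesc, smul_dotProduct, smul_eq_mul]
      _ = eigvecDesc hM j ⬝ᵥ (M *ᵥ x) := by
          rw [dotProduct_mulVec, ← mulVec_transpose, hsymm]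
      _ = r * (eigvecDesc hM j ⬝ᵥ x) := by rw [hx, dotProduct_smul, smul_eq_mul]
  exact (mul_eq_mul_right_iff.mp h).resolve_left hj

theorem trace_transpose_mul_mul {ι : Type*} [Fintype ι] (U : Matrix (Fin n) ι ℝ) :
    trace (Uᵀ * M * U) =
      ∑ i, eigDesc hM i * ((eigvecDesc hM * U) i ⬝ᵥ (eigvecDesc hM * U) i) := by
  rw [← trace_transpose_mul_diagonal_mul]
  congr 1
  calc Uᵀ * M * U = Uᵀ * (M * (eigvecDesc hM)ᵀ * eigvecDesc hM) * U := by
        rw [Matrix.mul_assoc M, transpose_mul_eigvecDesc, Matrix.mul_one]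
    _ = _ := by rw [mul_transpose_eigvecDesc, transpose_mul]; simp only [Matrix.mul_assoc]

theorem eigvecDesc_mul_apply {ι : Type*} [Fintype ι] (U : Matrix (Fin n) ι ℝ) (i : Fin n) :
    (eigvecDesc hM * U) i = Uᵀ *ᵥ eigvecDesc hM i :=
  (mulVec_transpose U _).symm

section Weights

variable {ι : Type*} [Fintype ι] [DecidableEq ι] {U : Matrix (Fin n) ι ℝ}

theorem dotProduct_eigvecDesc_mul_le_one (hU : Uᵀ * U = 1) (i : Fin n) :
    (eigvecDesc hM * U) i ⬝ᵥ (eigvecDesc hM * U) i ≤ 1 := by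
  rw [eigvecDesc_mul_apply, ← dotProduct_eigvecDesc_self hM i]
  exact dotProduct_transpose_mulVec_le hU _

theorem sum_dotProduct_eigvecDesc_mul (hU : Uᵀ * U = 1) :
    ∑ i, (eigvecDesc hM * U) i ⬝ᵥ (eigvecDesc hM * U) i = Fintype.card ι := by
  rw [← frobSq_eq_sum_dotProduct, frobSq_eq_trace, transpose_mul, Matrix.mul_assoc,
    ← Matrix.mul_assoc (eigvecDesc hM)ᵀ, transpose_mul_eigvecDesc, Matrix.one_mul, hU, trace_one]

theorem mem_range_of_dotProduct_eigvecDesc_mul_eq_one (hU : Uᵀ * U = 1) {i : Fin n}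
    (h : (eigvecDesc hM * U) i ⬝ᵥ (eigvecDesc hM * U) i = 1) :
    eigvecDesc hM i ∈ LinearMap.range U.mulVecLin := by
  refine mem_range_of_dotProduct_transpose_mulVec_eq hU ?_
  rw [← eigvecDesc_mul_apply, h, dotProduct_eigvecDesc_self]

end Weights

theorem topEigSpace_le {K : ℕ} (hK : K < n)
    (hgap : ∀ i : Fin n, (i : ℕ) < K → eigDesc hM ⟨K, hK⟩ < eigDesc hM i)
    {S : Submodule ℝ (Fin n → ℝ)} (hS : ∀ i : Fin n, (i : ℕ) < K → eigvecDesc hM i ∈ S) :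
    topEigSpace hM K ≤ S := by
  refine iSup_le fun i x hx => ?_
  have hx' : M *ᵥ x = eigDesc hM i.1 • x := by simpa [sub_eq_zero] using hx
  rw [← sum_dotProduct_eigvecDesc_smul hM x]
  refine S.sum_mem fun j _ => ?_
  by_cases hj : (j : ℕ) < K
  · exact S.smul_mem _ (hS j hj)
  · have hlt : eigDesc hM j < eigDesc hM i.1 :=
      (eigDesc_antitone hM (Fin.mk_le_of_le_val (not_lt.mp hj))).trans_lt (hgap i.1 i.2)
    rw [dotProduct_eigvecDesc_eq_zero hM hx' hlt.ne, zero_smul]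
    exact S.zero_mem

theorem le_finrank_topEigSpace {K : ℕ} (hK : K ≤ n) :
    K ≤ Module.finrank ℝ (topEigSpace hM K) := by
  have hli : LinearIndependent ℝ fun i : {i : Fin n // (i : ℕ) < K} => eigvecDesc hM i :=
    (linearIndependent_rows_of_isUnit ((isUnit_iff_isUnit_det _).mpr
      (isUnit_det_of_right_inverse (eigvecDesc_mul_transpose hM)))).comp _ Subtype.val_injective
  have hspan : Submodule.span ℝ (Set.range fun i : {i : Fin n // (i : ℕ) < K} => eigvecDesc hM i)
      ≤ topEigSpace hM K := by
    refine Submodule.span_le.mpr ?_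
    rintro _ ⟨i, rfl⟩
    refine Submodule.mem_iSup_of_mem i ?_
    simp [mulVec_eigvecDesc]
  calc K = Fintype.card {i : Fin n // (i : ℕ) < K} := by
        rw [Fintype.card_subtype, Fin.card_filter_val_lt, min_eq_right hK]
    _ = _ := (finrank_span_eq_card hli).symm
    _ ≤ _ := Submodule.finrank_mono hspan

variable (K : ℕ)

def topEigvecs : Matrix (Fin n) {i : Fin n // (i : ℕ) < K} ℝ :=
  (eigvecDesc hM)ᵀ.submatrix id Subtype.val

theorem transpose_mul_topEigvecs : (topEigvecs hM K)ᵀ * topEigvecs hM K = 1 := by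
  rw [topEigvecs, transpose_submatrix, transpose_transpose,
    ← submatrix_mul _ _ _ _ _ Function.bijective_id, eigvecDesc_mul_transpose,
    submatrix_one _ Subtype.val_injective]

theorem mul_topEigvecs :
    M * topEigvecs hM K =
      topEigvecs hM K * diagonal fun i : {i : Fin n // (i : ℕ) < K} => eigDesc hM i := by
  ext k i
  rw [mul_diagonal]
  simpa [topEigvecs, mul_apply, mulVec, dotProduct, mul_comm] using
    congrFun (mulVec_eigvecDesc hM i) k

end SortedEigenbasis

section Gram

variable {N C : ℕ} (Z : Matrix (Fin N) (Fin C) ℝ)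

theorem eigDesc_mul_transpose_nonneg (i : Fin N) : 0 ≤ eigDesc (isHermitian_mult Z) i :=
  (posSemidef_self_mul_conjTranspose Z).eigenvalues_nonneg _

theorem frobSq_transpose_mul_eq_sum {ι : Type*} [Fintype ι] (U : Matrix (Fin N) ι ℝ) :
    frobSq (Uᵀ * Z) = ∑ i, eigDesc (isHermitian_mult Z) i *
      ((eigvecDesc (isHermitian_mult Z) * U) i ⬝ᵥ (eigvecDesc (isHermitian_mult Z) * U) i) := by
  rw [frobSq_transpose_mul_eq_trace, trace_transpose_mul_mul]

theorem frobSq_transpose_topEigvecs_mul (K : ℕ) :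
    frobSq ((topEigvecs (isHermitian_mult Z) K)ᵀ * Z) = sumTopEig (isHermitian_mult Z) K := by
  rw [frobSq_transpose_mul_eq_trace, Matrix.mul_assoc, mul_topEigvecs, ← Matrix.mul_assoc,
    transpose_mul_topEigvecs, Matrix.one_mul, trace_diagonal, sumTopEig, ← Finset.sum_filter]
  exact (Finset.sum_subtype _ (fun _ => by simp) _).symm

theorem eigvecDesc_mem_range_of_sumTopEig_le {K : ℕ} (hK : K < N)
    (hgap : ∀ i : Fin N, (i : ℕ) < K →
      eigDesc (isHermitian_mult Z) ⟨K, hK⟩ < eigDesc (isHermitian_mult Z) i)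
    {ι : Type*} [Fintype ι] [DecidableEq ι] {U : Matrix (Fin N) ι ℝ} (hU : Uᵀ * U = 1)
    (hι : Fintype.card ι ≤ K) (hle : sumTopEig (isHermitian_mult Z) K ≤ frobSq (Uᵀ * Z))
    {i : Fin N} (hi : (i : ℕ) < K) :
    eigvecDesc (isHermitian_mult Z) i ∈ LinearMap.range U.mulVecLin := by
  set hZ := isHermitian_mult Z
  have hcard : (Finset.univ.filter fun j : Fin N => (j : ℕ) < K).card = K := by
    rw [Fin.card_filter_val_lt, min_eq_right hK.le]
  refine mem_range_of_dotProduct_eigvecDesc_mul_eq_one hZ hU <|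
    eq_one_of_sum_le_sum_mul (Finset.univ.filter fun j : Fin N => (j : ℕ) < K)
      (μ := eigDesc hZ) (c := fun j => (eigvecDesc hZ * U) j ⬝ᵥ (eigvecDesc hZ * U) j)
      (eigDesc_mul_transpose_nonneg Z _)
      (fun j hj => hgap j (Finset.mem_filter.mp hj).2)
      (fun j hj => eigDesc_antitone hZ (Fin.mk_le_of_le_val (not_lt.mp (by simpa using hj))))
      (fun _ => Finset.sum_nonneg fun _ _ => mul_self_nonneg _)
      (dotProduct_eigvecDesc_mul_le_one hZ hU)
      (by rw [sum_dotProduct_eigvecDesc_mul hZ hU, hcard]; exact_mod_cast hι)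
      (by rwa [Finset.sum_filter, ← sumTopEig, ← frobSq_transpose_mul_eq_sum])
      (Finset.mem_filter.mpr ⟨Finset.mem_univ i, hi⟩)

end Gram

section LeastSquares

variable {N D C : ℕ} {X : Matrix (Fin N) (Fin D) ℝ}

theorem isUnit_det_transpose_mul_self (h : X.rank = D) : IsUnit (Xᵀ * X).det := by
  have hrange : LinearMap.range (Xᵀ * X).mulVecLin = ⊤ := Submodule.eq_top_of_finrank_eq
    (by rw [← rank, rank_transpose_mul_self, h, Module.finrank_fin_fun])
  exact (isUnit_iff_isUnit_det _).mp
    (mulVec_surjective_iff_isUnit.mp (LinearMap.range_eq_top.mp hrange))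

theorem ols_eq_mul (X : Matrix (Fin N) (Fin D) ℝ) (Y : Matrix (Fin N) (Fin C) ℝ) :
    ols X Y = X * ((Xᵀ * X)⁻¹ * Xᵀ * Y) := by
  simp only [ols, Matrix.mul_assoc]

theorem transpose_mul_ols_sub (hX : IsUnit (Xᵀ * X).det) (Y : Matrix (Fin N) (Fin C) ℝ) :
    Xᵀ * (ols X Y - Y) = 0 := by
  rw [ols_eq_mul, Matrix.mul_sub, ← Matrix.mul_assoc, Matrix.mul_assoc _ Xᵀ,
    mul_nonsing_inv_cancel_left _ _ hX, sub_self]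

theorem frobSq_sub_eq_frobSq_sub_ols_add (hX : IsUnit (Xᵀ * X).det)
    (Y : Matrix (Fin N) (Fin C) ℝ) (G : Matrix (Fin D) (Fin C) ℝ) :
    frobSq (X * G - Y) = frobSq (X * G - ols X Y) + frobSq (ols X Y - Y) := by
  have h := frobSq_add_of_transpose_mul_eq_zero (B := X * G - ols X Y) (R := ols X Y - Y) (by
    rw [ols_eq_mul, ← Matrix.mul_sub, transpose_mul, Matrix.mul_assoc, ← ols_eq_mul,
      transpose_mul_ols_sub hX, Matrix.mul_zero])
  rwa [sub_add_sub_cancel] at h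

theorem exists_mul_eq_topEigvecs (X : Matrix (Fin N) (Fin D) ℝ) {Z : Matrix (Fin N) (Fin C) ℝ}
    {B : Matrix (Fin D) (Fin C) ℝ} (hZ : Z = X * B) (K : ℕ)
    (hpos : ∀ i : Fin N, (i : ℕ) < K → 0 < eigDesc (isHermitian_mult Z) i) :
    ∃ V : Matrix (Fin D) {i : Fin N // (i : ℕ) < K} ℝ,
      X * V = topEigvecs (isHermitian_mult Z) K := by
  set U₀ := topEigvecs (isHermitian_mult Z) K
  set Dinv := diagonal fun i : {i : Fin N // (i : ℕ) < K} => (eigDesc (isHermitian_mult Z) i)⁻¹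
  refine ⟨B * Zᵀ * U₀ * Dinv, ?_⟩
  calc X * (B * Zᵀ * U₀ * Dinv) = Z * Zᵀ * U₀ * Dinv := by rw [hZ]; simp only [Matrix.mul_assoc]
    _ = U₀ := by
        rw [mul_topEigvecs, Matrix.mul_assoc, diagonal_mul_diagonal]
        convert Matrix.mul_one U₀
        exact diagonal_eq_one.mpr (funext fun i => mul_inv_cancel₀ (hpos i.1 i.2).ne')

end LeastSquares

/-- span characterization of the optimal encoder. Under the eigen-gap
condition `λ_K(ŶŶᵀ) > λ_{K+1}(ŶŶᵀ)` and `λ_K(ŶŶᵀ) > 0`, for every global minimizer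
`(V*, W*)` of `(V, W) ↦ ‖XVW − Y‖_F²`, the column space of `XV*` equals the top-`K`
eigenspace of `ŶŶᵀ`, where `Ŷ = X(XᵀX)⁻¹XᵀY`. -/
theorem stmt_7 {N D C K : ℕ}
    (X : Matrix (Fin N) (Fin D) ℝ) (Y : Matrix (Fin N) (Fin C) ℝ)
    (hrank : X.rank = D) (hKN : K < N)
    (hgap : eigDesc (isHermitian_mult (ols X Y)) ⟨K - 1, by omega⟩
          > eigDesc (isHermitian_mult (ols X Y)) ⟨K, hKN⟩) :
    ∀ (Vs : Matrix (Fin D) (Fin K) ℝ) (Ws : Matrix (Fin K) (Fin C) ℝ),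
      (∀ (V : Matrix (Fin D) (Fin K) ℝ) (W : Matrix (Fin K) (Fin C) ℝ),
        frobSq (X * Vs * Ws - Y) ≤ frobSq (X * V * W - Y)) →
      LinearMap.range (Matrix.mulVecLin (X * Vs))
        = topEigSpace (isHermitian_mult (ols X Y)) K := by
  intro Vs Ws hmin
  set Z := ols X Y
  set hZ := isHermitian_mult Z
  have hX := isUnit_det_transpose_mul_self hrank
  have hgapK : ∀ i : Fin N, (i : ℕ) < K → eigDesc hZ ⟨K, hKN⟩ < eigDesc hZ i := fun i hi =>
    hgap.trans_le (eigDesc_antitone hZ (Fin.le_iff_val_le_val.mpr (Nat.le_sub_one_of_lt hi)))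
  obtain ⟨V₀, hV₀⟩ := exists_mul_eq_topEigvecs X (ols_eq_mul X Y) K fun i hi =>
    (eigDesc_mul_transpose_nonneg Z _).trans_lt (hgapK i hi)
  obtain ⟨U, hU, hUrange⟩ := exists_transpose_mul_self_eq_one_range_eq
    (LinearMap.range (X * Vs).mulVecLin)
  obtain ⟨C', hC'⟩ := exists_mul_eq_of_range_le hUrange.ge
  have hexplained : sumTopEig hZ K ≤ frobSq (Uᵀ * Z) := by
    -- the competitor `X V₀ (U₀ᵀ Ŷ) = U₀ U₀ᵀ Ŷ`, its inner index transported to `Fin K`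
    have h := hmin (V₀.submatrix id (Fin.castLEquiv hKN.le))
      (((topEigvecs hZ K)ᵀ * Z).submatrix (Fin.castLEquiv hKN.le) id)
    rw [Matrix.mul_assoc X, Matrix.mul_assoc X, submatrix_mul_equiv, submatrix_id_id,
      frobSq_sub_eq_frobSq_sub_ols_add hX Y (Vs * Ws), frobSq_sub_eq_frobSq_sub_ols_add hX Y,
      ← Matrix.mul_assoc X V₀, hV₀, ← Matrix.mul_assoc X, ← hC', Matrix.mul_assoc U] at h
    linarith [frobSq_sub_frobSq_le hU Z (C' * Ws),
      frobSq_mul_transpose_mul_sub (transpose_mul_topEigvecs hZ K) Z,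
      frobSq_transpose_topEigvecs_mul Z K]
  have hle : topEigSpace hZ K ≤ LinearMap.range (X * Vs).mulVecLin :=
    hUrange ▸ topEigSpace_le hZ hKN hgapK fun i hi => eigvecDesc_mem_range_of_sumTopEig_le Z hKN
      hgapK hU (by rw [Fintype.card_fin]; exact rank_le_width (X * Vs)) hexplained hi
  exact (Submodule.eq_of_le_of_finrank_le hle
    ((rank_le_width (X * Vs)).trans (le_finrank_topEigSpace hZ hKN.le))).symm

end
end

section
/- Let Y ∈ ℝ^{N×C}, let X ∈ ℝ^{N×D} have full column rank D, let 1 ≤ K ≤ min(C, D), and assume λ_K(YYᵀ) > λ_{K+1}(YYᵀ) so that the top-K eigenspace S of YYᵀ is a well-defined K-dimensional subspace of ℝ^N. If S is contained in the column space of X, then the OLS prediction Ŷ := X(XᵀX)⁻¹XᵀY satisfies ‖Y − Ŷ‖_F² ≤ ‖Y‖_F² − (λ_1(YYᵀ) + … + λ_K(YYᵀ)). -/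
open Matrix BigOperators

noncomputable section

/-!
`Ŷ = P Y` where `P = X(XᵀX)⁻¹Xᵀ` is the orthogonal projection onto the column space of `X`,
so `‖Y - Ŷ‖_F² = ‖Y‖_F² - tr(P YYᵀ)`. In an orthonormal eigenbasis `(v_j)` of `YYᵀ` one has
`tr(P YYᵀ) = ∑ λ_j ‖P v_j‖²`: every term is nonnegative, and for the top `K` eigenvectors,
which lie in the column space of `X`, `P v_j = v_j` and the term is exactly `λ_j`.
-/

namespace Matrix

theorem trace_eq_sum_star_dotProduct_mulVec {𝕜 n : Type*} [RCLike 𝕜] [Fintype n]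
    [DecidableEq n] (b : OrthonormalBasis n 𝕜 (EuclideanSpace 𝕜 n)) (A : Matrix n n 𝕜) :
    A.trace = ∑ j, star ⇑(b j) ⬝ᵥ A *ᵥ ⇑(b j) := by
  have h : LinearMap.trace 𝕜 _ (toEuclideanLin A) = A.trace := by
    rw [toEuclideanLin_eq_toLin_orthonormal,
      LinearMap.trace_eq_matrix_trace 𝕜 (EuclideanSpace.basisFun n 𝕜).toBasis,
      LinearMap.toMatrix_toLin]
  rw [← h, LinearMap.trace_eq_sum_inner _ b]
  simp [EuclideanSpace.inner_eq_star_dotProduct, dotProduct_comm]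

section Projection

variable {m n : Type*} [Fintype m] [Fintype n] {P : Matrix m m ℝ}

theorem dotProduct_mulVec_eq_of_isIdempotentElem (hPs : P.IsSymm) (hPi : IsIdempotentElem P)
    (v : m → ℝ) : v ⬝ᵥ P *ᵥ v = (P *ᵥ v) ⬝ᵥ (P *ᵥ v) := by
  have hvecMul : v ᵥ* P = P *ᵥ v := by rw [← vecMul_transpose, hPs.eq]
  conv_lhs => rw [← hPi.eq, ← mulVec_mulVec, dotProduct_mulVec, hvecMul]

theorem frobSq_eq_trace (M : Matrix m n ℝ) : frobSq M = (Mᵀ * M).trace := by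
  simp only [frobSq, trace, diag, mul_apply, transpose_apply, sq]
  exact Finset.sum_comm

theorem frobSq_sub_mul_of_isIdempotentElem (hPs : P.IsSymm) (hPi : IsIdempotentElem P)
    (Y : Matrix m n ℝ) : frobSq (Y - P * Y) = frobSq Y - (P * (Y * Yᵀ)).trace := by
  have hexpand : (Y - P * Y)ᵀ * (Y - P * Y) = Yᵀ * Y - Yᵀ * (P * Y) := by
    rw [transpose_sub, transpose_mul, hPs.eq, Matrix.sub_mul, Matrix.mul_sub, Matrix.mul_sub,
      Matrix.mul_assoc Yᵀ P (P * Y), ← Matrix.mul_assoc P P Y, hPi.eq,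
      Matrix.mul_assoc Yᵀ P Y]
    abel
  rw [frobSq_eq_trace, hexpand, trace_sub, frobSq_eq_trace, trace_mul_comm Yᵀ (P * Y),
    Matrix.mul_assoc]

end Projection

section HatMatrix

variable {K m n : Type*} [Field K] [Fintype m] [Fintype n] [DecidableEq n] {X : Matrix m n K}

def hatMatrix (X : Matrix m n K) : Matrix m m K :=
  X * (Xᵀ * X)⁻¹ * Xᵀ

theorem hatMatrix_isSymm (X : Matrix m n K) : (hatMatrix X).IsSymm := by
  simp only [IsSymm, hatMatrix, transpose_mul, transpose_transpose, transpose_nonsing_inv,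
    Matrix.mul_assoc]

theorem hatMatrix_mul_eq_self (hX : IsUnit (Xᵀ * X).det) : hatMatrix X * X = X := by
  rw [hatMatrix, Matrix.mul_assoc, Matrix.mul_assoc, nonsing_inv_mul _ hX, Matrix.mul_one]

theorem isIdempotentElem_hatMatrix (hX : IsUnit (Xᵀ * X).det) :
    IsIdempotentElem (hatMatrix X) := by
  unfold IsIdempotentElem
  nth_rw 2 [hatMatrix]
  rw [← Matrix.mul_assoc, ← Matrix.mul_assoc, hatMatrix_mul_eq_self hX, hatMatrix]

theorem hatMatrix_mulVec_of_mem_range (hX : IsUnit (Xᵀ * X).det) {v : m → K}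
    (hv : v ∈ LinearMap.range X.mulVecLin) : hatMatrix X *ᵥ v = v := by
  obtain ⟨w, rfl⟩ := hv
  simp only [mulVecLin_apply, mulVec_mulVec, hatMatrix_mul_eq_self hX]

theorem isUnit_det_transpose_mul_self_of_rank_eq [LinearOrder K] [IsStrictOrderedRing K]
    (hrank : X.rank = Fintype.card n) : IsUnit (Xᵀ * X).det := by
  rw [← isUnit_iff_isUnit_det, ← mulVec_surjective_iff_isUnit, ← coe_mulVecLin,
    ← LinearMap.range_eq_top]
  apply Submodule.eq_top_of_finrank_eq
  rw [← rank, rank_transpose_mul_self, hrank, Module.finrank_fintype_fun_eq_card]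

end HatMatrix

section Spectrum

variable {n : Type*} [Fintype n] [DecidableEq n] {M : Matrix n n ℝ}

theorem IsHermitian.trace_mul_eq_sum_eigenvalues_mul (hM : M.IsHermitian) (P : Matrix n n ℝ) :
    (P * M).trace = ∑ j, hM.eigenvalues j *
      (⇑(hM.eigenvectorBasis j) ⬝ᵥ P *ᵥ ⇑(hM.eigenvectorBasis j)) := by
  rw [trace_eq_sum_star_dotProduct_mulVec hM.eigenvectorBasis]
  refine Finset.sum_congr rfl fun j _ => ?_
  rw [← mulVec_mulVec, hM.mulVec_eigenvectorBasis, mulVec_smul, dotProduct_smul, star_trivial,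
    smul_eq_mul]

theorem IsHermitian.sum_eigenvalues_le_trace_mul_of_isIdempotentElem (hM : M.IsHermitian)
    (hnn : ∀ j, 0 ≤ hM.eigenvalues j) {P : Matrix n n ℝ} (hPs : P.IsSymm)
    (hPi : IsIdempotentElem P) {s : Finset n}
    (hs : ∀ j ∈ s, P *ᵥ ⇑(hM.eigenvectorBasis j) = ⇑(hM.eigenvectorBasis j)) :
    ∑ j ∈ s, hM.eigenvalues j ≤ (P * M).trace := by
  rw [hM.trace_mul_eq_sum_eigenvalues_mul]
  calc ∑ j ∈ s, hM.eigenvalues j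
      = ∑ j ∈ s, hM.eigenvalues j *
          (⇑(hM.eigenvectorBasis j) ⬝ᵥ P *ᵥ ⇑(hM.eigenvectorBasis j)) := by
        refine Finset.sum_congr rfl fun j hj => ?_
        have hunit := hM.eigenvectorBasis.inner_eq_one j
        rw [EuclideanSpace.inner_eq_star_dotProduct, star_trivial] at hunit
        rw [hs j hj, hunit, mul_one]
    _ ≤ _ := by
        refine Finset.sum_le_sum_of_subset_of_nonneg (Finset.subset_univ s) fun j _ _ => ?_
        rw [dotProduct_mulVec_eq_of_isIdempotentElem hPs hPi]
        exact mul_nonneg (hnn j) (by simpa using dotProduct_star_self_nonneg (P *ᵥ _))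

end Spectrum

end Matrix

section TopEigenspace

variable {n : ℕ} {M : Matrix (Fin n) (Fin n) ℝ}

def eigDescPerm (hM : M.IsHermitian) : Equiv.Perm (Fin n) :=
  Fin.revPerm.trans (Tuple.sort hM.eigenvalues)

theorem eigDesc_eq_eigenvalues_eigDescPerm (hM : M.IsHermitian) (i : Fin n) :
    eigDesc hM i = hM.eigenvalues (eigDescPerm hM i) :=
  rfl

theorem eigenvectorBasis_eigDescPerm_mem_topEigSpace (hM : M.IsHermitian) {K : ℕ} {i : Fin n}
    (hi : (i : ℕ) < K) : ⇑(hM.eigenvectorBasis (eigDescPerm hM i)) ∈ topEigSpace hM K := by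
  refine Submodule.mem_iSup_of_mem (⟨i, hi⟩ : {i : Fin n // (i : ℕ) < K}) ?_
  simp [hM.mulVec_eigenvectorBasis, eigDesc_eq_eigenvalues_eigDescPerm]

theorem sumTopEig_eq_sum_eigenvalues (hM : M.IsHermitian) (K : ℕ) :
    sumTopEig hM K =
      ∑ j ∈ ({i | (i : ℕ) < K} : Finset (Fin n)).map (eigDescPerm hM).toEmbedding,
        hM.eigenvalues j := by
  rw [sumTopEig, ← Finset.sum_filter, Finset.sum_map]
  rfl

end TopEigenspace

theorem ols_eq_hatMatrix_mul {N D C : ℕ} (X : Matrix (Fin N) (Fin D) ℝ)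
    (Y : Matrix (Fin N) (Fin C) ℝ) : ols X Y = hatMatrix X * Y :=
  rfl

/-- Step 5 of Theorem 2: if the top-`K` eigenspace of `YYᵀ` is contained
in the column space of `X`, then the OLS prediction `Ŷ` of `Y` from `X` satisfies
`‖Y − Ŷ‖_F² ≤ ‖Y‖_F² − (λ_1(YYᵀ) + … + λ_K(YYᵀ))`. -/
theorem stmt_12 {N D C K : ℕ}
    (Y : Matrix (Fin N) (Fin C) ℝ) (X : Matrix (Fin N) (Fin D) ℝ)
    (hrank : X.rank = D)
    -- the top-K eigenspace of YYᵀ is contained in the column space of X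
    (hsub : topEigSpace (isHermitian_mult Y) K ≤ LinearMap.range X.mulVecLin) :
    frobSq (Y - ols X Y) ≤ frobSq Y - sumTopEig (isHermitian_mult Y) K := by
  have hX : IsUnit (Xᵀ * X).det :=
    isUnit_det_transpose_mul_self_of_rank_eq (by rw [hrank, Fintype.card_fin])
  have hM := isHermitian_mult Y
  have hnn : ∀ j, 0 ≤ hM.eigenvalues j := by
    simpa using (posSemidef_self_mul_conjTranspose Y).eigenvalues_nonneg
  have htop : sumTopEig hM K ≤ (hatMatrix X * (Y * Yᵀ)).trace := by
    rw [sumTopEig_eq_sum_eigenvalues]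
    refine hM.sum_eigenvalues_le_trace_mul_of_isIdempotentElem hnn (hatMatrix_isSymm X)
      (isIdempotentElem_hatMatrix hX) fun j hj => ?_
    obtain ⟨i, hi, rfl⟩ := Finset.mem_map.1 hj
    exact hatMatrix_mulVec_of_mem_range hX
      (hsub (eigenvectorBasis_eigDescPerm_mem_topEigSpace hM (by simpa using hi)))
  rw [ols_eq_hatMatrix_mul, frobSq_sub_mul_of_isIdempotentElem (hatMatrix_isSymm X)
    (isIdempotentElem_hatMatrix hX)]
  linarith

end
end
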